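/- arXiv:2602.14532 — 6 statements merged into one kernel-verified Lean document; each statement's English description precedes it below -/
import Mathlib

section
/- For every k ∈ ℕ, the element E[J_{n+1}^k] lies in the center of the group algebra ℂ[S_n], where J_{n+1} = Σ_{i=1}^n (i, n+1) is the Jucys–Murphy element of S_{n+1} and E : ℂ[S_{n+1}] → ℂ[S_n] is the linear map sending g ∈ S_n to itself and g ∈ S_{n+1} \ S_n to 0. -/
/-!
Permutations fixing the last point permute the transpositions `(i, n+1)` by conjugation, so they
commute with `J_{n+1}` and hence with `J_{n+1}^k`. The restriction `E` to the subgroup `S_n` is a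
`ℂ[S_n]`-bimodule map, so `E[J_{n+1}^k]` still commutes with every `g ∈ S_n`, hence with `ℂ[S_n]`.
-/

open Classical in
/-- The restriction map `E : ℂ[S_{n+1}] → ℂ[S_n]` sending a permutation `g` to itself if
`g` fixes the last point (i.e. `g ∈ S_n`) and to `0` otherwise, extended linearly.
(We regard `ℂ[S_n]` as the span inside `ℂ[S_{n+1}]` of the permutations fixing the last
point.) -/
noncomputable def Ecut (n : ℕ) (a : MonoidAlgebra ℂ (Equiv.Perm (Fin (n + 1)))) :
    MonoidAlgebra ℂ (Equiv.Perm (Fin (n + 1))) :=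
  MonoidAlgebra.ofCoeff
    (Finsupp.filter (fun σ : Equiv.Perm (Fin (n + 1)) => σ (Fin.last n) = Fin.last n) a.coeff)

/-- The Jucys–Murphy element `J_{n+1} = Σ_{i=1}^n (i, n+1)` in `ℂ[S_{n+1}]`. -/
noncomputable def JM (n : ℕ) : MonoidAlgebra ℂ (Equiv.Perm (Fin (n + 1))) :=
  ∑ i : Fin n, MonoidAlgebra.single (Equiv.swap i.castSucc (Fin.last n)) (1 : ℂ)

open MonoidAlgebra

section Restrict

variable {k G : Type*} [Semiring k] [Group G] (H : Subgroup G)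

open Classical in
noncomputable def restrictSubgroup (x : MonoidAlgebra k G) : MonoidAlgebra k G :=
  ofCoeff (x.coeff.filter (· ∈ H))

theorem mem_of_mem_support_restrictSubgroup {x : MonoidAlgebra k G} {g : G}
    (hg : g ∈ (restrictSubgroup H x).coeff.support) : g ∈ H := by
  classical
  rw [restrictSubgroup, coeff_ofCoeff, Finsupp.support_filter, Finset.mem_filter] at hg
  exact hg.2

variable {H}

theorem restrictSubgroup_single_mul {h : G} (hh : h ∈ H) (r : k) (x : MonoidAlgebra k G) :
    restrictSubgroup H (single h r * x) = single h r * restrictSubgroup H x := by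
  ext y
  simp only [restrictSubgroup, coeff_ofCoeff, coeff_single_mul_apply, Finsupp.filter_apply]
  rw [H.mul_mem_cancel_left (H.inv_mem hh)]
  split_ifs <;> simp

theorem restrictSubgroup_mul_single {h : G} (hh : h ∈ H) (r : k) (x : MonoidAlgebra k G) :
    restrictSubgroup H (x * single h r) = restrictSubgroup H x * single h r := by
  ext y
  simp only [restrictSubgroup, coeff_ofCoeff, coeff_mul_single_apply, Finsupp.filter_apply]
  rw [H.mul_mem_cancel_right (H.inv_mem hh)]
  split_ifs <;> simp

theorem Commute.restrictSubgroup_right {h : G} (hh : h ∈ H) {r : k} {x : MonoidAlgebra k G}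
    (hx : Commute (single h r) x) : Commute (single h r) (restrictSubgroup H x) := by
  rw [Commute, SemiconjBy, ← restrictSubgroup_single_mul hh, hx.eq, restrictSubgroup_mul_single hh]

end Restrict

theorem commute_of_forall_commute_single {k G : Type*} [CommSemiring k] [Monoid G]
    {x a : MonoidAlgebra k G} (h : ∀ g ∈ a.coeff.support, Commute x (single g 1)) :
    Commute x a := by
  rw [← a.sum_coeff_single]
  refine Commute.sum_right _ _ _ fun g hg => ?_
  simpa [smul_single'] using (h g hg).smul_right (a.coeff g)

theorem commute_single_sum_single_swap {k α : Type*} [Semiring k] [Fintype α] [DecidableEq α]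
    {a : α} {g : Equiv.Perm α} (hg : g a = a) :
    Commute (single g (1 : k)) (∑ i, single (Equiv.swap i a) 1) := by
  simp only [Commute, SemiconjBy, Finset.mul_sum, Finset.sum_mul, single_mul_single, one_mul,
    Equiv.mul_swap_eq_swap_mul, hg]
  exact Equiv.sum_comp g (fun i => single (Equiv.swap i a * g) (1 : k))

-- The extra term `swap (n+1) (n+1) = 1` makes the index set all of `Fin (n+1)`, which `g` permutes.
theorem JM_add_one (n : ℕ) : JM n + 1 = ∑ i, single (Equiv.swap i (Fin.last n)) (1 : ℂ) := by
  rw [Fin.sum_univ_castSucc, Equiv.swap_self, ← Equiv.Perm.one_def, ← one_def, JM]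

theorem Ecut_eq_restrictSubgroup_stabilizer (n : ℕ) :
    Ecut n = restrictSubgroup (MulAction.stabilizer (Equiv.Perm (Fin (n + 1))) (Fin.last n)) := by
  funext x
  unfold Ecut restrictSubgroup
  congr

theorem commute_single_JM {n : ℕ} {g : Equiv.Perm (Fin (n + 1))}
    (hg : g (Fin.last n) = Fin.last n) :
    Commute (single g 1) (JM n) := by
  have h := commute_single_sum_single_swap (k := ℂ) hg
  rw [← JM_add_one] at h
  simpa using h.sub_right (Commute.one_right _)

/-- For every `k`, the element `E[J_{n+1}^k]` lies in the center of the group algebra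
`ℂ[S_n]`: it is supported on permutations fixing the last point, and it commutes with
every element of `ℂ[S_n]`. -/
theorem Ecut_JM_pow_mem_center (n k : ℕ) :
    (∀ σ ∈ (Ecut n ((JM n) ^ k)).coeff.support, σ (Fin.last n) = Fin.last n) ∧
    ∀ a : MonoidAlgebra ℂ (Equiv.Perm (Fin (n + 1))),
      (∀ σ ∈ a.coeff.support, σ (Fin.last n) = Fin.last n) →
      Commute (Ecut n ((JM n) ^ k)) a := by
  rw [Ecut_eq_restrictSubgroup_stabilizer]
  refine ⟨fun σ hσ => mem_of_mem_support_restrictSubgroup _ hσ, fun a ha => ?_⟩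
  refine commute_of_forall_commute_single fun g hg => ?_
  exact (((commute_single_JM (ha g hg)).pow_right k).restrictSubgroup_right (ha g hg)).symm
end

section
/- Let G be a finite group, H ≤ G a subgroup, and E : ℂ[G] → ℂ[H] the linear map with E[g] = g for g ∈ H and E[g] = 0 for g ∈ G\H. Then for every irreducible representation π^α of H with minimal central projection e^α ∈ ℂ[H], and every b ∈ ℂ[G], tr π^α(E[b]) = (1/([G:H]·dim α)) Σ_{β ∈ Ĝ} (dim β)· tr π^β(b e^α), where the sum runs over the irreducible representations π^β of G. -/
/-!
Column orthogonality `∑_β (dim β) χ^β = |G| δ₁` turns the right-hand sum into `|G|` times the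
coefficient of `1` in `b e^α`, and that coefficient is `(dim α / |H|) ∑_{h ∈ H} b_h χ^α(h)
= (dim α / |H|) tr π^α(E[b])`; the constants cancel because `|G| = [G:H] |H|`.
Column orthogonality itself comes from row orthogonality and `∑_β (dim β)² = |G|` by a
norm computation in `ℓ²(G)`, for which `χ(g⁻¹) = conj χ(g)` is obtained by the unitary trick.
-/

open CategoryTheory Classical

/-- The linear extension to `ℂ[G]` of `tr ∘ π` for a representation `π` of `G` with
character `χ`: `tr π(a) = Σ_g a_g χ(g)`. -/
noncomputable def trExt {G : Type} [Group G] (V : FDRep ℂ G) (a : MonoidAlgebra ℂ G) : ℂ :=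
  a.coeff.sum (fun g c => c * V.character g)

/-- `tr π^α(E[b])` for `α` a representation of the subgroup `H` and `b ∈ ℂ[G]`, where
`E : ℂ[G] → ℂ[H]` is the restriction map (`E[g] = g` for `g ∈ H`, `E[g] = 0` otherwise). -/
noncomputable def trResExt {G : Type} [Group G] (H : Subgroup G) (A : FDRep ℂ H)
    (b : MonoidAlgebra ℂ G) : ℂ :=
  b.coeff.sum (fun g c => if hg : g ∈ H then c * A.character ⟨g, hg⟩ else 0)

/-- The minimal central projection `e^α = (dim α/|H|) Σ_{h∈H} χ^α(h⁻¹) h`, regarded as an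
element of `ℂ[G]`. -/
noncomputable def eproj {G : Type} [Group G] [Fintype G] (H : Subgroup G) (A : FDRep ℂ H) :
    MonoidAlgebra ℂ G :=
  (A.character 1 / (Nat.card H : ℂ)) •
    ∑ h : H, A.character h⁻¹ • MonoidAlgebra.single (h : G) (1 : ℂ)

open scoped Matrix ComplexOrder InnerProductSpace ComplexConjugate

/-- `P = ∑ₕ (ρ h)ᴴ (ρ h)` is positive definite and `ρ`-invariant, so `ρ g⁻¹ = P⁻¹ (ρ g)ᴴ P`. -/
theorem Matrix.trace_map_inv_eq_star {G n 𝕜 : Type*} [Group G] [Fintype G] [Fintype n]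
    [DecidableEq n] [RCLike 𝕜] (ρ : G →* Matrix n n 𝕜) (g : G) :
    (ρ g⁻¹).trace = star (ρ g).trace := by
  set P : Matrix n n 𝕜 := ∑ h, (ρ h)ᴴ * ρ h with hP_def
  have hP : P.PosDef := by
    rw [hP_def, ← Finset.add_sum_erase _ _ (Finset.mem_univ (1 : G)), map_one, mul_one,
      conjTranspose_one]
    exact PosDef.one.add_posSemidef
      (posSemidef_sum _ fun h _ => posSemidef_conjTranspose_mul_self _)
  have hP_invariant : (ρ g)ᴴ * P * ρ g = P := by
    simp only [P, Finset.mul_sum, Finset.sum_mul]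
    refine Fintype.sum_equiv (Equiv.mulRight g) _ _ fun h => ?_
    simp [conjTranspose_mul, mul_assoc]
  have hP_det : IsUnit P.det := (isUnit_iff_isUnit_det P).mp hP.isUnit
  have hconj : ρ g⁻¹ = P⁻¹ * (ρ g)ᴴ * P :=
    calc ρ g⁻¹ = P⁻¹ * ((ρ g)ᴴ * P * ρ g) * ρ g⁻¹ := by
          rw [hP_invariant, nonsing_inv_mul _ hP_det, one_mul]
      _ = P⁻¹ * (ρ g)ᴴ * P := by
          simp only [mul_assoc, ← map_mul, mul_inv_cancel, map_one, mul_one]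
  rw [hconj, trace_conj' hP.isUnit, trace_conjTranspose]

namespace FDRep

theorem character_eq_zero_of_char_one_eq_zero {k G : Type} [Field k] [CharZero k] [Monoid G]
    (V : FDRep k G) (hV : V.character 1 = 0) (g : G) : V.character g = 0 := by
  rw [char_one, Nat.cast_eq_zero, Module.finrank_zero_iff] at hV
  rw [character, Subsingleton.elim (V.ρ g) 0, map_zero]

variable {G : Type} [Group G] [Fintype G]

theorem char_inv {𝕜 : Type} [RCLike 𝕜] (V : FDRep 𝕜 G) (g : G) :
    V.character g⁻¹ = star (V.character g) := by
  let b := Module.finBasis 𝕜 V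
  have := Matrix.trace_map_inv_eq_star ((LinearMap.toMatrixAlgEquiv b).toMonoidHom.comp V.ρ) g
  simp only [character, LinearMap.trace_eq_matrix_trace 𝕜 b]
  exact this

theorem inner_toLp_character (V W : FDRep ℂ G) [Simple V] [Simple W] :
    ⟪WithLp.toLp 2 V.character, WithLp.toLp 2 W.character⟫_ℂ =
      if Nonempty (V ≅ W) then (Fintype.card G : ℂ) else 0 := by
  have h := char_orthonormal W V
  rw [Iso.nonempty_iso_symm, Nat.card_eq_fintype_card,
    inv_mul_eq_iff_eq_mul₀ (Nat.cast_ne_zero.mpr Fintype.card_ne_zero)] at h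
  simp only [PiLp.inner_apply, RCLike.inner_apply, starRingEnd_apply, ← char_inv]
  split_ifs at h ⊢ <;> simpa [mul_comm] using h

/-- With `r = |G| δ₁` and `s = ∑_β (dim β) χ^β` in `ℓ²(G)`, row orthogonality and
`∑_β (dim β)² = |G|` give `⟪r, r⟫ = ⟪r, s⟫ = ⟪s, r⟫ = ⟪s, s⟫ = |G|²`, hence `‖r - s‖² = 0`. -/
theorem sum_char_one_mul_char {ι : Type} [Fintype ι] (W : ι → FDRep ℂ G) [∀ i, Simple (W i)]
    (hdistinct : ∀ i j : ι, i ≠ j → IsEmpty (W i ≅ W j))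
    (hcomplete : ∑ i : ι, ((W i).character 1) ^ 2 = (Fintype.card G : ℂ)) (x : G) :
    ∑ i, (W i).character 1 * (W i).character x =
      if x = 1 then (Fintype.card G : ℂ) else 0 := by
  let χ (i : ι) : EuclideanSpace ℂ G := WithLp.toLp 2 (W i).character
  have horth (i j : ι) : ⟪χ i, χ j⟫_ℂ = if i = j then (Fintype.card G : ℂ) else 0 := by
    rw [inner_toLp_character]
    by_cases hij : i = j
    · subst hij; simp [Nonempty.intro (Iso.refl (W i))]
    · simp [hij, not_nonempty_iff.mpr (hdistinct i j hij)]
  have hdim_conj (i : ι) : conj ((W i).character 1) = (W i).character 1 := by simp [char_one]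
  generalize hn : (Fintype.card G : ℂ) = n at hcomplete horth ⊢
  have hn_conj : conj n = n := by simp [← hn]
  set s : EuclideanSpace ℂ G := ∑ i, (W i).character 1 • χ i
  set r : EuclideanSpace ℂ G := EuclideanSpace.single 1 n
  have hs_apply (y : G) : s y = ∑ i, (W i).character 1 * (W i).character y := by simp [s, χ]
  have hs_one : s 1 = n := by simpa [hs_apply, sq] using hcomplete
  have hss : ⟪s, s⟫_ℂ = n ^ 2 := by
    simp only [s, sum_inner, inner_sum, inner_smul_left, inner_smul_right, horth, hdim_conj,
      mul_ite, mul_zero, Finset.sum_ite_eq', Finset.mem_univ, if_true, ← mul_assoc, ← sq,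
      ← Finset.sum_mul, hcomplete]
  have hrs : ⟪r, s⟫_ℂ = n ^ 2 := by rw [EuclideanSpace.inner_single_left, hs_one, hn_conj, sq]
  have hsr : ⟪s, r⟫_ℂ = n ^ 2 := by rw [← inner_conj_symm, hrs, map_pow, hn_conj]
  have hrr : ⟪r, r⟫_ℂ = n ^ 2 := by
    rw [EuclideanSpace.inner_single_left, PiLp.single_apply, if_pos rfl, hn_conj, sq]
  have hr_eq_s : r = s := by
    rw [← sub_eq_zero, ← inner_self_eq_zero (𝕜 := ℂ), inner_sub_sub_self, hrr, hrs, hsr, hss]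
    ring
  rw [← hs_apply, ← hr_eq_s]
  simp [r, PiLp.single_apply]

end FDRep

section GroupAlgebra

variable {G : Type} [Group G] [Fintype G]

theorem trExt_eq_sum (V : FDRep ℂ G) (a : MonoidAlgebra ℂ G) :
    trExt V a = ∑ g, a.coeff g * V.character g :=
  Finsupp.sum_fintype _ _ fun _ => zero_mul _

theorem sum_char_one_mul_trExt {ι : Type} [Fintype ι] (W : ι → FDRep ℂ G) [∀ i, Simple (W i)]
    (hdistinct : ∀ i j : ι, i ≠ j → IsEmpty (W i ≅ W j))
    (hcomplete : ∑ i : ι, ((W i).character 1) ^ 2 = (Fintype.card G : ℂ))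
    (a : MonoidAlgebra ℂ G) :
    ∑ i, (W i).character 1 * trExt (W i) a = Fintype.card G * a.coeff 1 :=
  calc ∑ i, (W i).character 1 * trExt (W i) a
      = ∑ g, a.coeff g * ∑ i, (W i).character 1 * (W i).character g := by
        simp only [trExt_eq_sum, Finset.mul_sum]
        rw [Finset.sum_comm]
        exact Finset.sum_congr rfl fun g _ => Finset.sum_congr rfl fun i _ => mul_left_comm _ _ _
    _ = ∑ g, a.coeff g * if g = 1 then (Fintype.card G : ℂ) else 0 := by
        simp only [FDRep.sum_char_one_mul_char W hdistinct hcomplete]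
    _ = Fintype.card G * a.coeff 1 := by simp [mul_comm]

theorem trResExt_eq_sum (H : Subgroup G) (A : FDRep ℂ H) (b : MonoidAlgebra ℂ G) :
    trResExt H A b = ∑ h : H, b.coeff h * A.character h := by
  rw [trResExt, Finsupp.sum_fintype _ _ fun _ => by simp, Finset.sum_dite,
    Finset.sum_const_zero, add_zero]
  exact Finset.sum_bij (fun x _ => ⟨x.1, (Finset.mem_filter.mp x.2).2⟩) (by simp) (by simp)
    (by simp) (by simp)

theorem coeff_one_mul_eproj (H : Subgroup G) (A : FDRep ℂ H) (b : MonoidAlgebra ℂ G) :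
    (b * eproj H A).coeff 1 = A.character 1 / Nat.card H * trResExt H A b := by
  rw [eproj, mul_smul_comm, MonoidAlgebra.coeff_smul_apply, smul_eq_mul, trResExt_eq_sum,
    Finset.mul_sum, MonoidAlgebra.coeff_sum, Finset.sum_apply']
  congr 1
  refine Fintype.sum_equiv (Equiv.inv H) _ _ fun h => ?_
  simp [MonoidAlgebra.coeff_mul_single_apply, mul_comm]

end GroupAlgebra

theorem trRes_eq_sum_over_irreps_general {G : Type} [Group G] [Fintype G] (H : Subgroup G)
    (A : FDRep ℂ H)
    {ι : Type} [Fintype ι] (W : ι → FDRep ℂ G) [∀ i, Simple (W i)]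
    (hdistinct : ∀ i j : ι, i ≠ j → IsEmpty (W i ≅ W j))
    (hcomplete : ∑ i : ι, ((W i).character 1) ^ 2 = (Fintype.card G : ℂ))
    (b : MonoidAlgebra ℂ G) :
    trResExt H A b =
      (1 / ((H.index : ℂ) * A.character 1)) *
        ∑ i : ι, (W i).character 1 * trExt (W i) (b * eproj H A) := by
  rw [sum_char_one_mul_trExt W hdistinct hcomplete, coeff_one_mul_eproj]
  by_cases hdim : A.character 1 = 0
  · -- both sides vanish, the right one because `1 / 0 = 0`
    simp [trResExt_eq_sum, hdim, A.character_eq_zero_of_char_one_eq_zero hdim]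
  have hcard : (H.index : ℂ) * Nat.card H = Fintype.card G := by
    rw [← Nat.cast_mul, H.index_mul_card, Nat.card_eq_fintype_card]
  have hH : (Nat.card H : ℂ) ≠ 0 := Nat.cast_ne_zero.mpr Nat.card_pos.ne'
  have hindex : (H.index : ℂ) ≠ 0 := Nat.cast_ne_zero.mpr Subgroup.index_ne_zero_of_finite
  rw [← hcard]
  field_simp

/-- Let `G` be a finite group, `H ≤ G`, `E : ℂ[G] → ℂ[H]` the restriction map, `π^α` an
irreducible representation of `H` with minimal central projection `e^α ∈ ℂ[H]`, and let
`(π^β)_{β ∈ Ĝ}` be a complete family of pairwise non-isomorphic irreducible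
representations of `G`.  Then for every `b ∈ ℂ[G]`,
`tr π^α(E[b]) = (1/([G:H]·dim α)) Σ_{β ∈ Ĝ} (dim β)·tr π^β(b e^α)`. -/
theorem trRes_eq_sum_over_irreps {G : Type} [Group G] [Fintype G] (H : Subgroup G)
    (A : FDRep ℂ H) [Simple A]
    {ι : Type} [Fintype ι] (W : ι → FDRep ℂ G) [∀ i, Simple (W i)]
    (hdistinct : ∀ i j : ι, i ≠ j → IsEmpty (W i ≅ W j))
    (hcomplete : ∑ i : ι, ((W i).character 1) ^ 2 = (Fintype.card G : ℂ))
    (b : MonoidAlgebra ℂ G) :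
    trResExt H A b =
      (1 / ((H.index : ℂ) * A.character 1)) *
        ∑ i : ι, (W i).character 1 * trExt (W i) (b * eproj H A) :=
  trRes_eq_sum_over_irreps_general H A W hdistinct hcomplete b
end

section
/- For a finite group T and θ a conjugacy class of T, the number of (θ,2)-cycles in the wreath product S_n(T) = T^n ⋊ S_n is n(n−1)/2 · |T| · |C_θ|; i.e. the set C = { (y^{-1},(i))·(xy,(j))·(i j) : 1 ≤ i < j ≤ n, y ∈ T, x ∈ C_θ } has cardinality n(n−1)|T||C_θ|/2. -/
open Equiv Finset

lemma swap_eq_swap {α : Type*} [DecidableEq α] [LinearOrder α] {i j i' j' : α}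
    (hij : i < j) (hij' : i' < j') (h : Equiv.swap i j = Equiv.swap i' j') :
    i = i' ∧ j = j' := by
  have h1 : Equiv.swap i' j' i ≠ i := by rw [← h, Equiv.swap_apply_left]; exact hij.ne'
  have h2 : Equiv.swap i' j' j ≠ j := by rw [← h, Equiv.swap_apply_right]; exact hij.ne
  rw [Equiv.swap_apply_ne_self_iff] at h1 h2
  rcases h1.2 with h1 | h1
  · refine ⟨h1, ?_⟩
    rcases h2.2 with h2 | h2
    · exact absurd (h1 ▸ h2 ▸ hij) (lt_irrefl _)
    · exact h2
  · -- i = j'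
    exfalso
    have hji' : Equiv.swap i' j' i = j := by rw [← h, Equiv.swap_apply_left]
    rw [h1, Equiv.swap_apply_right] at hji'
    have h3 : i' < i := h1.symm ▸ hij'
    have h4 : i < i' := hji'.symm ▸ hij
    exact absurd h4 (asymm h3)

lemma two_mul_card_lt (n : ℕ) :
    2 * Nat.card {q : Fin n × Fin n // q.1 < q.2} = n * (n - 1) := by
  rw [Nat.card_eq_fintype_card, Fintype.card_subtype]
  have hswap : (univ.filter fun q : Fin n × Fin n => q.1 < q.2).card
      = (univ.filter fun q : Fin n × Fin n => q.2 < q.1).card := by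
    apply Finset.card_bij (fun q _ => q.swap)
    · intro a ha; simp_all
    · intro a _ b _ h; exact Prod.swap_injective h
    · intro b hb; exact ⟨b.swap, by simp_all, by simp⟩
  have hunion : (univ.filter fun q : Fin n × Fin n => q.1 < q.2)
      ∪ (univ.filter fun q : Fin n × Fin n => q.2 < q.1)
      = univ.filter fun q : Fin n × Fin n => q.1 ≠ q.2 := by
    ext q; simp [ne_comm, or_comm, lt_or_lt_iff_ne]
  have hdisj : Disjoint (univ.filter fun q : Fin n × Fin n => q.1 < q.2)
      (univ.filter fun q : Fin n × Fin n => q.2 < q.1) := by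
    rw [Finset.disjoint_filter]
    intro q _ h1 h2; exact absurd (h1.trans h2) (lt_irrefl _)
  have hoff : (univ.filter fun q : Fin n × Fin n => q.1 ≠ q.2) = (univ : Finset (Fin n)).offDiag := by
    ext q; simp [Finset.mem_offDiag]
  have := Finset.card_union_of_disjoint hdisj
  rw [hunion, hoff, Finset.offDiag_card, Finset.card_univ, Fintype.card_fin] at this
  have hmul : n * (n - 1) = n * n - n := by
    cases n with
    | zero => simp
    | succ m => simp [Nat.succ_sub_one]; ring_nf; omega
  rw [hmul]
  omega

/-- In the wreath product `S_n(T) = T^n ⋊ S_n` (whose underlying set is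
`(Fin n → T) × Perm (Fin n)`), the set of `(θ,2)`-cycles
`{(y⁻¹,(i))·(xy,(j))·(i j) : 1 ≤ i < j ≤ n, y ∈ T, x ∈ C_θ}` has cardinality
`n(n−1)/2 · |T| · |C_θ|`; equivalently, twice its cardinality is
`n(n−1)·|T|·|C_θ|`. -/
theorem card_theta_two_cycles (T : Type*) [Group T] [Finite T] (n : ℕ) (t : T) :
    2 * Nat.card {p : (Fin n → T) × Equiv.Perm (Fin n) //
        ∃ (i j : Fin n) (y x : T), i < j ∧ IsConj t x ∧
          p = (fun m => if m = i then y⁻¹ else if m = j then x * y else 1,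
               Equiv.swap i j)} =
      n * (n - 1) * Nat.card T * Nat.card {x : T // IsConj t x} := by
  set S := {p : (Fin n → T) × Equiv.Perm (Fin n) //
        ∃ (i j : Fin n) (y x : T), i < j ∧ IsConj t x ∧
          p = (fun m => if m = i then y⁻¹ else if m = j then x * y else 1,
               Equiv.swap i j)} with hS
  set P := {q : Fin n × Fin n // q.1 < q.2} × T × {x : T // IsConj t x} with hP
  have key : Nat.card P = Nat.card S := by
    apply Nat.card_eq_of_bijective
      (fun z => (⟨(fun m => if m = z.1.1.1 then z.2.1⁻¹ else
          if m = z.1.1.2 then z.2.2.1 * z.2.1 else 1, Equiv.swap z.1.1.1 z.1.1.2),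
        z.1.1.1, z.1.1.2, z.2.1, z.2.2.1, z.1.2, z.2.2.2, rfl⟩ : S))
    constructor
    · rintro ⟨⟨⟨i, j⟩, hij⟩, y, ⟨x, hx⟩⟩ ⟨⟨⟨i', j'⟩, hij'⟩, y', ⟨x', hx'⟩⟩ h
      simp only [Subtype.mk.injEq, Prod.mk.injEq] at h ⊢
      obtain ⟨hfun, hswap⟩ := h
      obtain ⟨hi, hj⟩ := swap_eq_swap hij hij' hswap
      subst hi; subst hj
      have hy : y = y' := by
        have := congrFun hfun i
        simpa using this
      subst hy
      have hx2 : x = x' := by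
        have := congrFun hfun j
        simp only [if_neg (ne_of_gt hij), if_pos rfl] at this
        exact mul_right_cancel this
      simp [hx2]
    · rintro ⟨p, i, j, y, x, hij, hx, hp⟩
      exact ⟨⟨⟨⟨i, j⟩, hij⟩, y, ⟨x, hx⟩⟩, by simp [hp]⟩
  rw [← key, hP, Nat.card_prod, Nat.card_prod, ← mul_assoc, ← mul_assoc,
    two_mul_card_lt]
end

section
/- Let T be a finite group, n ∈ ℕ, and define the Jucys–Murphy element of the wreath product S_{n+1}(T) by J_{n+1}^θ := A_{C'} − A_{C}, the difference of the indicator (sum over elements) of the (θ,2)-cycle conjugacy class C' of S_{n+1}(T) and that of the (θ,2)-cycle class C of S_n(T). Then J_{n+1}^θ = J_{n+1}·(A_θ,(n+1)) = (A_θ,(n+1))·J_{n+1}, where J_{n+1} = J_{n+1}^{{e_T}} and (A_θ,(n+1)) = Σ_{x ∈ C_θ} (x,(n+1)). -/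
/-- The action of `S_n` on `T^n` by permuting coordinates. -/
def permAct (T : Type*) [Group T] (n : ℕ) : Equiv.Perm (Fin n) →* MulAut (Fin n → T) where
  toFun σ :=
    { toFun := fun f => f ∘ σ.symm
      invFun := fun f => f ∘ σ
      left_inv := fun f => by ext i; simp
      right_inv := fun f => by ext i; simp
      map_mul' := fun f g => rfl }
  map_one' := rfl
  map_mul' := fun σ τ => rfl

/-- The wreath product `S_n(T) = T^n ⋊ S_n`. -/
abbrev Wreath (T : Type*) [Group T] (n : ℕ) :=
  SemidirectProduct (Fin n → T) (Equiv.Perm (Fin n)) (permAct T n)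

variable {T : Type*} [Group T] [Fintype T]

open Classical in
/-- The conjugacy class `C_θ` of `t` in `T`, as a finset. -/
noncomputable def conjCl (t : T) : Finset T := Finset.univ.filter (fun x => IsConj t x)

/-- The element `(y⁻¹,(i))·(xy,(j))·(i j)` of the wreath product. -/
def wElt {n : ℕ} (i j : Fin n) (y x : T) : Wreath T n :=
  ⟨fun m => if m = i then y⁻¹ else if m = j then x * y else 1, Equiv.swap i j⟩

/-- The indicator `A_{C'}` of the `(θ,2)`-cycle conjugacy class of `S_{n+1}(T)`
in `ℂ[S_{n+1}(T)]`. -/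
noncomputable def classSumBig (n : ℕ) (t : T) : MonoidAlgebra ℂ (Wreath T (n + 1)) :=
  ∑ i : Fin (n + 1), ∑ j : Fin (n + 1),
    if i < j then ∑ y : T, ∑ x ∈ conjCl t, MonoidAlgebra.single (wElt i j y x) (1 : ℂ)
    else 0

/-- The indicator `A_C` of the `(θ,2)`-cycle conjugacy class of `S_n(T)`, viewed inside
`ℂ[S_{n+1}(T)]`. -/
noncomputable def classSumSmall (n : ℕ) (t : T) : MonoidAlgebra ℂ (Wreath T (n + 1)) :=
  ∑ i : Fin n, ∑ j : Fin n,
    if i < j then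
      ∑ y : T, ∑ x ∈ conjCl t,
        MonoidAlgebra.single (wElt i.castSucc j.castSucc y x) (1 : ℂ)
    else 0

/-- The Jucys–Murphy element `J_{n+1}^θ = A_{C'} − A_C` of the wreath product. -/
noncomputable def JMw (n : ℕ) (t : T) : MonoidAlgebra ℂ (Wreath T (n + 1)) :=
  classSumBig n t - classSumSmall n t

/-- The element `(A_θ, (n+1)) = Σ_{x ∈ C_θ} (x, (n+1))`. -/
noncomputable def AthetaLast (n : ℕ) (t : T) : MonoidAlgebra ℂ (Wreath T (n + 1)) :=
  ∑ x ∈ conjCl t,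
    MonoidAlgebra.single (⟨fun m => if m = Fin.last n then x else 1, 1⟩ : Wreath T (n + 1))
      (1 : ℂ)

/-
Only the transpositions `(i n+1)` survive in `A_{C'} - A_C`, so `J_{n+1}^θ` is the sum of the
elements `(y⁻¹,(i))(xy,(n+1))(i n+1)`. Each of them equals `(x,(n+1))·(y⁻¹,(i))(y,(n+1))(i n+1)`,
and also `(y'⁻¹,(i))(y',(n+1))(i n+1)·(x,(n+1))` with `y' = xy`; summing over `y ∈ T` absorbs
the shift `y ↦ xy`.
-/

open Finset

lemma conjCl_one : conjCl (1 : T) = {1} := by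
  ext x
  simp [conjCl, isConj_iff, eq_comm]

lemma AthetaLast_eq (n : ℕ) (t : T) :
    AthetaLast n t = ∑ x ∈ conjCl t,
      MonoidAlgebra.single (⟨Pi.mulSingle (Fin.last n) x, 1⟩ : Wreath T (n + 1)) (1 : ℂ) := by
  simp only [AthetaLast, ← Pi.mulSingle_apply]

lemma JMw_eq_sum (n : ℕ) (t : T) :
    JMw n t = ∑ i : Fin n, ∑ x ∈ conjCl t, ∑ y : T,
      MonoidAlgebra.single (wElt i.castSucc (Fin.last n) y x) (1 : ℂ) := by
  have last_not_lt (j : Fin (n + 1)) : ¬ Fin.last n < j := not_lt.mpr (Fin.le_last j)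
  simp only [JMw, classSumBig, classSumSmall, Fin.sum_univ_castSucc (n := n),
    Fin.castSucc_lt_castSucc_iff, Fin.castSucc_lt_last, last_not_lt, if_true, if_false,
    sum_const_zero, add_zero, sum_add_distrib, add_sub_cancel_left]
  exact sum_congr rfl fun i _ => sum_comm

section Factorization

variable {n : ℕ} {i j : Fin n}

omit [Fintype T] in
lemma permAct_mulSingle (σ : Equiv.Perm (Fin n)) (j : Fin n) (x : T) :
    permAct T n σ (Pi.mulSingle j x) = Pi.mulSingle (σ j) x := by
  funext m
  change (Pi.mulSingle j x : Fin n → T) (σ.symm m) = _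
  simp only [Pi.mulSingle_apply, Equiv.symm_apply_eq]

omit [Fintype T] in
lemma wElt_one_mul_mulSingle (hij : i ≠ j) (y x : T) :
    wElt i j y 1 * (⟨Pi.mulSingle j x, 1⟩ : Wreath T n) = wElt i j (x⁻¹ * y) x := by
  refine SemidirectProduct.ext (funext fun m => ?_) (mul_one _)
  rw [SemidirectProduct.mul_left, permAct_mulSingle]
  simp only [wElt, Pi.mul_apply, Equiv.swap_apply_right, Pi.mulSingle_apply]
  rcases eq_or_ne m i with rfl | hmi
  · simp
  rcases eq_or_ne m j with rfl | hmj
  · simp [hij.symm]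
  · simp [hmi, hmj]

omit [Fintype T] in
lemma mulSingle_mul_wElt_one (hij : i ≠ j) (y x : T) :
    (⟨Pi.mulSingle j x, 1⟩ : Wreath T n) * wElt i j y 1 = wElt i j y x := by
  refine SemidirectProduct.ext (funext fun m => ?_) (one_mul _)
  simp only [SemidirectProduct.mul_left, wElt, map_one, MulAut.one_apply, Pi.mul_apply,
    Pi.mulSingle_apply]
  rcases eq_or_ne m i with rfl | hmi
  · simp [hij]
  rcases eq_or_ne m j with rfl | hmj
  · simp [hij.symm]
  · simp [hmi, hmj]

variable {k : Type*} [Semiring k]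

lemma sum_single_wElt_one_mul_single (hij : i ≠ j) (x : T) :
    (∑ y : T, MonoidAlgebra.single (wElt i j y 1) (1 : k)) *
        MonoidAlgebra.single (⟨Pi.mulSingle j x, 1⟩ : Wreath T n) 1 =
      ∑ y : T, MonoidAlgebra.single (wElt i j y x) 1 := by
  simp only [sum_mul, MonoidAlgebra.single_mul_single, mul_one, wElt_one_mul_mulSingle hij]
  exact Fintype.sum_equiv (Equiv.mulLeft x⁻¹) _ _ fun y => rfl

lemma single_mul_sum_single_wElt_one (hij : i ≠ j) (x : T) :
    MonoidAlgebra.single (⟨Pi.mulSingle j x, 1⟩ : Wreath T n) (1 : k) *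
        ∑ y : T, MonoidAlgebra.single (wElt i j y 1) 1 =
      ∑ y : T, MonoidAlgebra.single (wElt i j y x) 1 := by
  simp only [mul_sum, MonoidAlgebra.single_mul_single, mul_one, mulSingle_mul_wElt_one hij]

end Factorization

/-- `J_{n+1}^θ = J_{n+1}·(A_θ,(n+1)) = (A_θ,(n+1))·J_{n+1}` where `J_{n+1} = J_{n+1}^{e_T}`. -/
theorem JMw_eq_mul (n : ℕ) (t : T) :
    JMw n t = JMw n (1 : T) * AthetaLast n t ∧
    JMw n t = AthetaLast n t * JMw n (1 : T) := by
  have hne (i : Fin n) : i.castSucc ≠ Fin.last n := (Fin.castSucc_lt_last i).ne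
  rw [JMw_eq_sum, JMw_eq_sum, conjCl_one, AthetaLast_eq]
  simp only [sum_singleton]
  constructor
  · rw [sum_mul]
    refine sum_congr rfl fun i _ => ?_
    rw [mul_sum]
    exact sum_congr rfl fun x _ => (sum_single_wElt_one_mul_single (hne i) x).symm
  · rw [mul_sum]
    refine sum_congr rfl fun i _ => ?_
    rw [sum_mul]
    exact sum_congr rfl fun x _ => (single_mul_sum_single_wElt_one (hne i) x).symm
end

section
/- Let g, h be permutations in S_n with |supp(g) ∩ supp(h)| = r ≥ 1, where supp denotes the set of non-fixed points. Writing ℓ(w) := |type(w)| − l(type(w)) for the minimal number of transpositions expressing w (type(w) being the cycle type with fixed points removed), one has ℓ(gh) ≥ ℓ(g) + ℓ(h) − 2r + 2. -/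
/-- `ℓ(w) = |type(w)| − l(type(w))`: the sum of the lengths of the nontrivial cycles of `w`
minus their number, i.e. the minimal number of transpositions expressing `w`. -/
def permLen {n : ℕ} (w : Equiv.Perm (Fin n)) : ℕ :=
  w.cycleType.sum - w.cycleType.card

/-!
Multiplying by a transposition changes `ℓ` by at most one: it lowers `ℓ` by one when it splits a
point off a cycle (`swap x (w x) * w`) and raises it by one when it attaches a fixed point.
For `x ∈ supp g ∩ supp h` and `τ = swap x (h x)`, write `g * h = (g * τ) * (τ * h)`, so that
`ℓ (τ * h) = ℓ h - 1` and `x` leaves the common support. If `h x ∈ supp g`, the common support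
shrinks while `ℓ (g * τ) ≥ ℓ g - 1`; otherwise `ℓ (g * τ) = ℓ g + 1` and the common support does
not grow. Inducting on `|supp h|` down to disjoint supports, where `ℓ` is additive, gives
`ℓ g + ℓ h + 2 ≤ ℓ (g * h) + 2 * max r 1`.
-/

open Equiv Equiv.Perm Finset

theorem Equiv.Perm.card_cycleType_le_sum {α : Type*} [Fintype α] [DecidableEq α] (σ : Perm α) :
    Multiset.card σ.cycleType ≤ σ.cycleType.sum := by
  simpa using Multiset.card_nsmul_le_sum (s := σ.cycleType) (a := 1)
    fun _ hk => one_le_two.trans (two_le_of_mem_cycleType hk)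

variable {n : ℕ}

theorem permLen_inv (w : Perm (Fin n)) : permLen w⁻¹ = permLen w := by
  rw [permLen, permLen, cycleType_inv]

theorem permLen_mul_of_disjoint {u v : Perm (Fin n)} (huv : u.Disjoint v) :
    permLen (u * v) = permLen u + permLen v := by
  have hu := u.card_cycleType_le_sum
  have hv := v.card_cycleType_le_sum
  simp only [permLen, huv.cycleType_mul, Multiset.sum_add, Multiset.card_add]
  omega

theorem permLen_of_isCycle {c : Perm (Fin n)} (hc : c.IsCycle) :
    permLen c = #c.support - 1 := by
  simp [permLen, hc.cycleType]

theorem permLen_swap_mul_of_isCycle {c : Perm (Fin n)} (hc : c.IsCycle) {x : Fin n}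
    (hx : c x ≠ x) : permLen (swap x (c x) * c) + 1 = permLen c := by
  rw [permLen_of_isCycle hc]
  by_cases hcx : c (c x) = x
  · have hswap := hc.eq_swap_of_apply_apply_eq_self hx hcx
    generalize c x = y at hx hswap ⊢
    subst hswap
    simp [permLen, card_support_swap hx.symm]
  · have hcyc := hc.swap_mul hx hcx
    have hcard : #(swap x (c x) * c).support = #c.support - 1 := by
      rw [support_swap_mul_eq c x hcx, sdiff_singleton_eq_erase,
        card_erase_of_mem (mem_support.2 hx)]
    have := hcyc.two_le_card_support
    rw [permLen_of_isCycle hcyc]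
    omega

theorem permLen_swap_mul {w : Perm (Fin n)} {x : Fin n} (hx : w x ≠ x) :
    permLen (swap x (w x) * w) + 1 = permLen w := by
  set c := w.cycleOf x
  have hc : c.IsCycle := isCycle_cycleOf w hx
  have hcx : c x = w x := cycleOf_apply_self w x
  set d := w * c⁻¹
  have hdc : d.Disjoint c := disjoint_mul_inv_of_mem_cycleFactorsFinset
    (cycleOf_mem_cycleFactorsFinset_iff.2 (mem_support.2 hx))
  have hswap : (swap x (c x)).support ≤ c.support := by
    rw [support_swap (hcx ▸ hx).symm, insert_subset_iff, singleton_subset_iff]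
    exact ⟨mem_support.2 (hcx ▸ hx), apply_mem_support.2 (mem_support.2 (hcx ▸ hx))⟩
  have hds : d.Disjoint (swap x (c x)) := hdc.mono le_rfl hswap
  have hw : w = d * c := (inv_mul_cancel_right w c).symm
  calc permLen (swap x (w x) * w) + 1
      = permLen (d * (swap x (c x) * c)) + 1 := by
        rw [← hcx]
        conv_lhs => rw [hw]
        rw [← mul_assoc, ← hds.commute.eq, mul_assoc]
    _ = permLen d + permLen c := by
        rw [permLen_mul_of_disjoint (hds.mul_right hdc), add_assoc,
          permLen_swap_mul_of_isCycle hc (hcx ▸ hx)]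
    _ = permLen w := by rw [← permLen_mul_of_disjoint hdc, ← hw]

theorem permLen_mul_swap_inv {w : Perm (Fin n)} {x : Fin n} (hx : w x ≠ x) :
    permLen (w * swap x (w⁻¹ x)) + 1 = permLen w := by
  have hx' : w⁻¹ x ≠ x := fun h => hx (inv_eq_iff_eq.1 h).symm
  rw [← permLen_inv, mul_inv_rev, swap_inv, permLen_swap_mul hx', permLen_inv]

theorem permLen_mul_swap_of_apply_eq {u : Perm (Fin n)} {x y : Fin n} (hy : u y = y)
    (hxy : x ≠ y) : permLen (u * swap x y) = permLen u + 1 := by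
  have hvy : (u * swap x y) y ≠ y := by
    rw [mul_apply, swap_apply_right, ← hy]
    exact u.injective.ne hxy
  have hvy' : (u * swap x y)⁻¹ y = x := by
    rw [mul_inv_rev, swap_inv, mul_apply, inv_eq_iff_eq.2 hy.symm, swap_apply_right]
  have := permLen_mul_swap_inv hvy
  rwa [hvy', swap_comm y x, mul_swap_mul_self, eq_comm] at this

theorem permLen_mul_swap_le (u : Perm (Fin n)) (a b : Fin n) :
    permLen (u * swap a b) ≤ permLen u + 1 := by
  induction hk : permLen u using Nat.strong_induction_on generalizing u a b with
  | _ k ih =>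
  rcases eq_or_ne a b with rfl | hab
  · rw [swap_self, ← Perm.one_def, mul_one, hk]
    omega
  by_cases hb : u b = b
  · exact hk ▸ (permLen_mul_swap_of_apply_eq hb hab).le
  set e := u⁻¹ b
  set u' := u * swap b e
  have hlen : permLen u' + 1 = permLen u := permLen_mul_swap_inv hb
  have hu : u = u' * swap b e := (mul_swap_mul_self b e u).symm
  have hu'b : u' b = b := by simp [u', e]
  have heb : e ≠ b := fun h => hb (inv_eq_iff_eq.1 h).symm
  rcases eq_or_ne a e with rfl | hae
  · rw [hu, swap_comm, mul_swap_mul_self]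
    omega
  have key : u * swap a b = u' * swap e a * swap e b := by
    rw [hu, ← swap_mul_swap_mul_swap hab hae, swap_comm e b]
    simp only [mul_assoc, swap_mul_self, mul_one]
  have hfix : (u' * swap e a) b = b := by
    rw [mul_apply, swap_apply_of_ne_of_ne heb.symm hab.symm, hu'b]
  rw [key, permLen_mul_swap_of_apply_eq hfix heb]
  have := ih _ (by omega) u' e a rfl
  omega

theorem Equiv.Perm.support_mul_swap_inter_support_swap_mul_subset {α : Type*} [Fintype α]
    [DecidableEq α] (g h : Perm α) (x : α) :
    (g * swap x (h x)).support ∩ (swap x (h x) * h).support ⊆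
      insert (h x) ((g.support ∩ h.support).erase x) := by
  intro z hz
  obtain ⟨hzg, hzh⟩ := mem_inter.1 hz
  obtain ⟨hzh, hzx⟩ := mem_support_swap_mul_imp_mem_support_ne hzh
  rcases eq_or_ne z (h x) with rfl | hzhx
  · exact mem_insert_self _ _
  · rw [mem_support, mul_apply, swap_apply_of_ne_of_ne hzx hzhx, ← mem_support] at hzg
    exact mem_insert_of_mem (mem_erase.2 ⟨hzx, mem_inter.2 ⟨hzg, hzh⟩⟩)

theorem permLen_add_add_two_le (g h : Perm (Fin n)) :
    permLen g + permLen h + 2 ≤ permLen (g * h) + 2 * max #(g.support ∩ h.support) 1 := by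
  induction hk : #h.support using Nat.strong_induction_on generalizing g h with
  | _ k ih =>
  obtain hS | ⟨x, hx⟩ := (g.support ∩ h.support).eq_empty_or_nonempty
  · have hgh : g.Disjoint h :=
      disjoint_iff_disjoint_support.2 (disjoint_iff_inter_eq_empty.2 hS)
    simp [permLen_mul_of_disjoint hgh, hS]
  set S := g.support ∩ h.support
  obtain ⟨hgx, hhx⟩ := mem_inter.1 hx
  set τ := swap x (h x)
  have hh : permLen (τ * h) + 1 = permLen h := permLen_swap_mul (mem_support.1 hhx)
  have ih' := ih _ (hk ▸ card_support_swap_mul (mem_support.1 hhx)) (g * τ) (τ * h) rfl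
  rw [mul_assoc, swap_mul_self_mul] at ih'
  have hsub := support_mul_swap_inter_support_swap_mul_subset g h x
  have hS : #(S.erase x) + 1 = #S := card_erase_add_one hx
  by_cases hhxg : h x ∈ g.support
  · have hhxS : h x ∈ S.erase x :=
      mem_erase.2 ⟨mem_support.1 hhx, mem_inter.2 ⟨hhxg, apply_mem_support.2 hhx⟩⟩
    rw [insert_eq_of_mem hhxS] at hsub
    have hcard : max #((g * τ).support ∩ (τ * h).support) 1 ≤ #(S.erase x) :=
      max_le (card_le_card hsub) (card_pos.2 ⟨_, hhxS⟩)
    have hg : permLen g ≤ permLen (g * τ) + 1 := by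
      simpa only [τ, mul_swap_mul_self] using permLen_mul_swap_le (g * τ) x (h x)
    omega
  · have hcard : max #((g * τ).support ∩ (τ * h).support) 1 ≤ #S :=
      max_le ((card_le_card hsub).trans ((card_insert_le _ _).trans hS.le)) (card_pos.2 ⟨x, hx⟩)
    have hg : permLen (g * τ) = permLen g + 1 :=
      permLen_mul_swap_of_apply_eq (notMem_support.1 hhxg) (mem_support.1 hhx).symm
    omega

/-- If `g, h ∈ S_n` have supports intersecting in exactly `r ≥ 1` points, then
`ℓ(gh) ≥ ℓ(g) + ℓ(h) − 2r + 2`. -/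
theorem permLen_mul_ge {n : ℕ} (g h : Equiv.Perm (Fin n)) (r : ℕ)
    (hr : (g.support ∩ h.support).card = r) (hr1 : 1 ≤ r) :
    (permLen (g * h) : ℤ) ≥ permLen g + permLen h - 2 * r + 2 := by
  have := permLen_add_add_two_le g h
  rw [hr, max_eq_left hr1] at this
  omega
end

section
/- Fix partitions-with-colors ρ, σ ∈ 𝕐([T]) (types with no trivially colored 1-cycles) and r ∈ {0,1,…,min(|ρ|,|σ|)}. Let S^{(n)}_{ρ,σ}(r) be the set of pairs (g,h) with g in the conjugacy class of S_n(T) of type ι_{n,|ρ|}ρ, h in the class of type ι_{n,|σ|}σ, and |supp g ∩ supp h| = r. Then there is a constant C (independent of n) with |S^{(n)}_{ρ,σ}(r)| ≤ C·n^{|ρ|+|σ|−r} for all n. -/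
open Classical in
/-- The support of `g = (x_1,…,x_n)τ ∈ S_n(T)`. -/
noncomputable def wSupp {T : Type*} [Group T] {n : ℕ} (g : Wreath T n) : Finset (Fin n) :=
  g.right.support ∪ Finset.univ.filter (fun j => g.left j ≠ 1)

/-- The natural embedding `S_k(T) ⊆ S_n(T)` (`k ≤ n`), padding with identities;
the conjugacy class in `S_n(T)` of the image of an element of type `ρ` is the class of
type `ι_{n,k} ρ`. -/
noncomputable def embW {T : Type*} [Group T] {k n : ℕ} (h : k ≤ n) (g : Wreath T k) :
    Wreath T n :=
  ⟨fun j => if hj : (j : ℕ) < k then g.left ⟨j, hj⟩ else 1,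
   g.right.viaEmbedding (Fin.castLEEmb h)⟩

theorem card_finsets_of_card_le_le (α : Type*) [Finite α] (m : ℕ) :
    Nat.card {U : Finset α // U.card ≤ m} ≤ (Nat.card α + 1) ^ m := by
  classical
  let ofEnum : (Fin m → Option α) → {U : Finset α // U.card ≤ m} := fun f =>
    ⟨(Finset.univ.image f).eraseNone,
      (Finset.card_eraseNone_le _).trans (Finset.card_image_le.trans (by simp))⟩
  have hsurj : Function.Surjective ofEnum := by
    rintro ⟨U, hU⟩
    refine ⟨fun i => U.toList[(i : ℕ)]?, Subtype.ext ?_⟩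
    ext x
    simp only [ofEnum, Finset.mem_eraseNone, Finset.mem_image, Finset.mem_univ, true_and]
    rw [← Finset.mem_toList, List.mem_iff_getElem?]
    constructor
    · rintro ⟨i, hi⟩
      exact ⟨i, hi⟩
    · rintro ⟨i, hi⟩
      exact ⟨⟨i, (List.getElem?_eq_some_iff.mp hi).1.trans_le (by simpa using hU)⟩, hi⟩
  simpa [Nat.card_fun, Finite.card_option] using Nat.card_le_card_of_surjective ofEnum hsurj

instance {T : Type*} [Group T] [Finite T] {n : ℕ} : Finite (Wreath T n) :=
  Finite.of_equiv _ SemidirectProduct.equivProd.symm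

section Wreath

variable {T : Type*} [Group T] {n : ℕ}

theorem permAct_apply (τ : Equiv.Perm (Fin n)) (f : Fin n → T) (j : Fin n) :
    permAct T n τ f j = f (τ⁻¹ j) := rfl

theorem conj_left_apply (c g : Wreath T n) (j : Fin n) :
    (c * g * c⁻¹).left j
      = c.left j * g.left (c.right⁻¹ j) * (c.left (c.right (g.right⁻¹ (c.right⁻¹ j))))⁻¹ := by
  simp only [SemidirectProduct.mul_left, SemidirectProduct.mul_right,
    SemidirectProduct.inv_left, permAct_apply, Pi.mul_apply, Pi.inv_apply, mul_inv_rev, inv_inv,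
    Equiv.Perm.coe_mul, Function.comp_apply]

theorem conj_right (c g : Wreath T n) : (c * g * c⁻¹).right = c.right * g.right * c.right⁻¹ := by
  simp

theorem notMem_wSupp_iff {g : Wreath T n} {j : Fin n} :
    j ∉ wSupp g ↔ g.left j = 1 ∧ g.right j = j := by
  simp [wSupp, Equiv.Perm.mem_support, and_comm]

theorem right_apply_mem_of_wSupp_subset {U : Finset (Fin n)} {g : Wreath T n}
    (hg : wSupp g ⊆ U) {j : Fin n} (hj : j ∈ U) : g.right j ∈ U := by
  by_cases hjg : j ∈ wSupp g
  · by_contra hgj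
    have hfix := (notMem_wSupp_iff.mp fun h => hgj (hg h)).2
    rw [g.right.injective hfix] at hgj
    exact hgj (hg hjg)
  · rwa [(notMem_wSupp_iff.mp hjg).2]

theorem notMem_wSupp_conj {c g : Wreath T n} {j : Fin n} (h : c.right⁻¹ j ∉ wSupp g) :
    j ∉ wSupp (c * g * c⁻¹) := by
  obtain ⟨hleft, hright⟩ := notMem_wSupp_iff.mp h
  have hright' : g.right⁻¹ (c.right⁻¹ j) = c.right⁻¹ j := by
    rw [Equiv.Perm.inv_eq_iff_eq, hright]
  rw [notMem_wSupp_iff, conj_left_apply, conj_right, hleft, hright']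
  simp only [Equiv.Perm.mul_apply, hright, mul_one]
  simp

theorem card_wSupp_le_of_isConj {g x : Wreath T n} (h : IsConj g x) :
    (wSupp x).card ≤ (wSupp g).card := by
  obtain ⟨c, rfl⟩ := isConj_iff.mp h
  calc (wSupp (c * g * c⁻¹)).card ≤ ((wSupp g).image c.right).card := by
        refine Finset.card_le_card fun j hj => Finset.mem_image.mpr ⟨c.right⁻¹ j, ?_, by simp⟩
        by_contra hj'
        exact notMem_wSupp_conj hj' hj
    _ ≤ (wSupp g).card := Finset.card_image_le

theorem card_wSupp_embW_le {k : ℕ} (hkn : k ≤ n) (g : Wreath T k) :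
    (wSupp (embW hkn g)).card ≤ k := by
  have hsub : wSupp (embW hkn g) ⊆ Finset.univ.map (Fin.castLEEmb hkn) := by
    intro j hj
    by_contra hjk
    have hjk : ¬ (j : ℕ) < k := fun hj => hjk (Finset.mem_map.mpr ⟨⟨j, hj⟩, by simp, rfl⟩)
    refine notMem_wSupp_iff.mpr ⟨dif_neg hjk, ?_⟩ hj
    refine Equiv.Perm.viaEmbedding_apply_of_notMem _ _ _ ?_
    rintro ⟨i, rfl⟩
    exact hjk i.2
  simpa using Finset.card_le_card hsub

theorem eq_of_wSupp_subset {U : Finset (Fin n)} {g g' : Wreath T n}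
    (hg : wSupp g ⊆ U) (hg' : wSupp g' ⊆ U)
    (h : ∀ j ∈ U, g.left j = g'.left j ∧ g.right j = g'.right j) : g = g' := by
  have hall : ∀ j, g.left j = g'.left j ∧ g.right j = g'.right j := by
    intro j
    by_cases hj : j ∈ U
    · exact h j hj
    · obtain ⟨hl, hr⟩ := notMem_wSupp_iff.mp fun hj' => hj (hg hj')
      obtain ⟨hl', hr'⟩ := notMem_wSupp_iff.mp fun hj' => hj (hg' hj')
      exact ⟨hl.trans hl'.symm, hr.trans hr'.symm⟩
  exact SemidirectProduct.ext (funext fun j => (hall j).1) (Equiv.ext fun j => (hall j).2)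

theorem card_wSupp_subset_le [Finite T] (U : Finset (Fin n)) :
    Nat.card {g : Wreath T n // wSupp g ⊆ U} ≤ (Nat.card T * U.card) ^ U.card := by
  let restrict : {g : Wreath T n // wSupp g ⊆ U} → U → T × U := fun g j =>
    (g.1.left j, ⟨g.1.right j, right_apply_mem_of_wSupp_subset g.2 j.2⟩)
  have hinj : Function.Injective restrict := fun g g' h => Subtype.ext <|
    eq_of_wSupp_subset g.2 g'.2 fun j hj => by
      have hj := congrFun h ⟨j, hj⟩
      simp only [restrict, Prod.mk.injEq, Subtype.mk.injEq] at hj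
      exact hj
  simpa [Nat.card_fun] using Nat.card_le_card_of_injective restrict hinj

theorem card_pairs_card_wSupp_union_le [Finite T] (m : ℕ) :
    Nat.card {p : Wreath T n × Wreath T n // (wSupp p.1 ∪ wSupp p.2).card ≤ m}
      ≤ (n + 1) ^ m * ((Nat.card T * m + 1) ^ m) ^ 2 := by
  let Small := {U : Finset (Fin n) // U.card ≤ m}
  let Supported (U : Small) := {g : Wreath T n // wSupp g ⊆ U.1}
  let split : {p : Wreath T n × Wreath T n // (wSupp p.1 ∪ wSupp p.2).card ≤ m} →
      Σ U : Small, Supported U × Supported U := fun p =>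
    ⟨⟨_, p.2⟩, ⟨p.1.1, Finset.subset_union_left⟩, ⟨p.1.2, Finset.subset_union_right⟩⟩
  have hinj : Function.Injective split := fun p q h =>
    Subtype.ext (congrArg (fun x => (x.2.1.1, x.2.2.1)) h)
  have hfiber (U : Small) :
      Nat.card (Supported U × Supported U) ≤ ((Nat.card T * m + 1) ^ m) ^ 2 := by
    rw [Nat.card_prod, ← sq]
    gcongr
    calc Nat.card (Supported U) ≤ (Nat.card T * U.1.card) ^ U.1.card := card_wSupp_subset_le U.1
      _ ≤ (Nat.card T * m + 1) ^ U.1.card := by gcongr; nlinarith [U.2]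
      _ ≤ (Nat.card T * m + 1) ^ m := Nat.pow_le_pow_right (by omega) U.2
  have := Fintype.ofFinite Small
  calc _ ≤ Nat.card (Σ U : Small, Supported U × Supported U) :=
        Nat.card_le_card_of_injective split hinj
    _ = ∑ U : Small, Nat.card (Supported U × Supported U) := Nat.card_sigma
    _ ≤ ∑ _U : Small, ((Nat.card T * m + 1) ^ m) ^ 2 := Finset.sum_le_sum fun U _ => hfiber U
    _ = Nat.card Small * ((Nat.card T * m + 1) ^ m) ^ 2 := by simp [Nat.card_eq_fintype_card]
    _ ≤ _ := by
      gcongr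
      simpa using card_finsets_of_card_le_le (Fin n) m

end Wreath

theorem card_support_overlap_bound_general (T : Type*) [Group T] [Finite T]
    (k₁ k₂ : ℕ) (g₀ : Wreath T k₁) (h₀ : Wreath T k₂)
    (r : ℕ) :
    ∃ C : ℕ, ∀ n : ℕ, ∀ (hn₁ : k₁ ≤ n) (hn₂ : k₂ ≤ n),
      Nat.card {p : Wreath T n × Wreath T n //
          IsConj (embW hn₁ g₀) p.1 ∧ IsConj (embW hn₂ h₀) p.2 ∧
          (wSupp p.1 ∩ wSupp p.2).card = r} ≤ C * n ^ (k₁ + k₂ - r) := by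
  set m := k₁ + k₂ - r
  refine ⟨((Nat.card T * m + 1) ^ m) ^ 2 * 2 ^ m, fun n hn₁ hn₂ => ?_⟩
  have hunion (p : Wreath T n × Wreath T n)
      (hp : IsConj (embW hn₁ g₀) p.1 ∧ IsConj (embW hn₂ h₀) p.2 ∧
        (wSupp p.1 ∩ wSupp p.2).card = r) : (wSupp p.1 ∪ wSupp p.2).card ≤ m := by
    obtain ⟨hconj₁, hconj₂, hr⟩ := hp
    have hg := (card_wSupp_le_of_isConj hconj₁).trans (card_wSupp_embW_le hn₁ g₀)
    have hh := (card_wSupp_le_of_isConj hconj₂).trans (card_wSupp_embW_le hn₂ h₀)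
    have := Finset.card_union_add_card_inter (wSupp p.1) (wSupp p.2)
    omega
  have hpow : (n + 1) ^ m ≤ 2 ^ m * n ^ m := by
    rcases n.eq_zero_or_pos with rfl | hn
    · simp [show m = 0 by omega]
    · rw [← mul_pow]
      gcongr
      omega
  calc _ ≤ Nat.card {p : Wreath T n × Wreath T n // (wSupp p.1 ∪ wSupp p.2).card ≤ m} :=
        Nat.card_le_card_of_injective _ (Subtype.impEmbedding _ _ hunion).injective
    _ ≤ (n + 1) ^ m * ((Nat.card T * m + 1) ^ m) ^ 2 := card_pairs_card_wSupp_union_le m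
    _ ≤ _ := by
      rw [mul_comm, mul_assoc]
      gcongr

/-- Fix types `ρ, σ` (with no trivially colored `1`-cycles), represented by elements
`g₀ ∈ S_{k₁}(T)`, `h₀ ∈ S_{k₂}(T)` of full support (so `|ρ| = k₁`, `|σ| = k₂`), and
`r ≤ min(k₁,k₂)`.  Then the set `S^{(n)}_{ρ,σ}(r)` of pairs `(g,h)` with `g` of type
`ι_{n,k₁}ρ`, `h` of type `ι_{n,k₂}σ`, and `|supp g ∩ supp h| = r` satisfies
`|S^{(n)}_{ρ,σ}(r)| ≤ C·n^{k₁+k₂−r}` for a constant `C` independent of `n`. -/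
theorem card_support_overlap_bound (T : Type*) [Group T] [Finite T]
    (k₁ k₂ : ℕ) (g₀ : Wreath T k₁) (h₀ : Wreath T k₂)
    (hg₀ : wSupp g₀ = Finset.univ) (hh₀ : wSupp h₀ = Finset.univ)
    (r : ℕ) (hr : r ≤ min k₁ k₂) :
    ∃ C : ℕ, ∀ n : ℕ, ∀ (hn₁ : k₁ ≤ n) (hn₂ : k₂ ≤ n),
      Nat.card {p : Wreath T n × Wreath T n //
          IsConj (embW hn₁ g₀) p.1 ∧ IsConj (embW hn₂ h₀) p.2 ∧
          (wSupp p.1 ∩ wSupp p.2).card = r} ≤ C * n ^ (k₁ + k₂ - r) :=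
  card_support_overlap_bound_general T k₁ k₂ g₀ h₀ r
end
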